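/- Let (X,d,W) be a UCW-hyperbolic space with monotone modulus of uniform convexity η, C ⊆ X a nonempty convex subset, T : C → C nonexpansive with a fixed point, (λ_n),(s_n) sequences in [0,1], and (x_n) the Ishikawa iteration starting with x ∈ C. Suppose θ : ℕ → ℕ is a rate of divergence for Σ_{n=0}^∞ λ_n(1−λ_n), b > 0 satisfies b ≥ d(x,p) for some fixed point p of T, and L, N_0 ∈ ℕ are such that s_n ≤ 1 − 1/L for all n ≥ N_0. Then for all ε > 0 and k ∈ ℕ there exists N ∈ ℕ with k ≤ N ≤ Ψ(ε,k,η,b,θ,L,N_0) and d(x_N, Tx_N) < ε, where Ψ(ε,k,η,b,θ,L,N_0) := h(ε/L, k+N_0, η, b, θ) and h(ε,k,η,b,θ) := θ(⌈(b+1)/(ε·η(b, ε/b))⌉ + k) if ε ≤ 2b, h(ε,k,η,b,θ) := k otherwise. In particular liminf_{n→∞} d(x_n, Tx_n) = 0. -/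

import Mathlib

open Set Filter Metric Bornology Function

/-- A `W`-hyperbolic space structure on a metric space `X` (Kohlenbach).
`W x y l` denotes `(1-l)x ⊕ l y`. -/
structure WHyp (X : Type*) [MetricSpace X] where
  W : X → X → ℝ → X
  W1 : ∀ (x y z : X), ∀ l ∈ Set.Icc (0:ℝ) 1,
    dist z (W x y l) ≤ (1 - l) * dist z x + l * dist z y
  W2 : ∀ (x y : X), ∀ l ∈ Set.Icc (0:ℝ) 1, ∀ l' ∈ Set.Icc (0:ℝ) 1,
    dist (W x y l) (W x y l') = |l - l'| * dist x y
  W3 : ∀ (x y : X), ∀ l ∈ Set.Icc (0:ℝ) 1, W x y l = W y x (1 - l)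
  W4 : ∀ (x y z w : X), ∀ l ∈ Set.Icc (0:ℝ) 1,
    dist (W x z l) (W y w l) ≤ (1 - l) * dist x y + l * dist z w

/-- `η` is a modulus of uniform convexity for the `W`-hyperbolic space `H`. -/
def WHyp.UnifConvex {X : Type*} [MetricSpace X] (H : WHyp X) (η : ℝ → ℝ → ℝ) : Prop :=
  (∀ r ε : ℝ, 0 < r → ε ∈ Set.Ioc (0:ℝ) 2 → η r ε ∈ Set.Ioc (0:ℝ) 1) ∧
  (∀ (r ε : ℝ) (a x y : X), 0 < r → ε ∈ Set.Ioc (0:ℝ) 2 →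
    dist x a ≤ r → dist y a ≤ r → ε * r ≤ dist x y →
    dist (H.W x y (1/2)) a ≤ (1 - η r ε) * r)

/-- A modulus of uniform convexity is monotone if it decreases in `r` for fixed `ε`. -/
def MonotoneModulus (η : ℝ → ℝ → ℝ) : Prop :=
  ∀ r s ε : ℝ, 0 < r → r ≤ s → ε ∈ Set.Ioc (0:ℝ) 2 → η s ε ≤ η r ε

/-- A subset `C` is convex in the `W`-hyperbolic space `H`. -/
def WHyp.ConvexSet {X : Type*} [MetricSpace X] (H : WHyp X) (C : Set X) : Prop :=
  ∀ x ∈ C, ∀ y ∈ C, ∀ l ∈ Set.Icc (0:ℝ) 1, H.W x y l ∈ C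

/-- The Ishikawa iteration: `x₀ = x`,
`x_{n+1} = (1-λ_n)x_n ⊕ λ_n T((1-s_n)x_n ⊕ s_n T x_n)`. -/
def WHyp.ishSeq {X : Type*} [MetricSpace X] (H : WHyp X) (T : X → X) (l s : ℕ → ℝ)
    (x : X) : ℕ → X
  | 0 => x
  | n + 1 =>
      H.W (H.ishSeq T l s x n)
        (T (H.W (H.ishSeq T l s x n) (T (H.ishSeq T l s x n)) (s n))) (l n)

/-- The bound `h(ε,k,η,b,θ)` from Proposition 4.4 of the paper. -/
noncomputable def hRate (η : ℝ → ℝ → ℝ) (b : ℝ) (θ : ℕ → ℕ) (ε : ℝ) (k : ℕ) : ℕ :=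
  if ε ≤ 2 * b then θ (⌈(b + 1) / (ε * η b (ε / b))⌉₊ + k) else k

/-!
Along the Ishikawa iteration the distance to the fixed point `p` is nonincreasing. While the
displacement `d(xₙ, Txₙ)` stays at least `ε`, the point `T yₙ`, where
`yₙ = (1 - sₙ)xₙ ⊕ sₙTxₙ`, is at distance at least `ε / L` from `xₙ`, and uniform convexity
(together with monotonicity of `η`, which lets us use the fixed radius `b`) makes `d(xₙ₊₁, p)`
drop by at least `λₙ(1 - λₙ) · (ε / L) · η(b, ε / (L b))`. The rate of divergence `θ` guarantees
that these drops add up to more than `b ≥ d(x, p)` before step `h(ε / L, k + N₀)`, which is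
impossible.
-/

theorem add_sum_Ico_le_of_succ_le {a g : ℕ → ℝ} {K N : ℕ} (hKN : K ≤ N)
    (h : ∀ n, K ≤ n → n < N → a (n + 1) + g n ≤ a n) :
    a N + ∑ i ∈ Finset.Ico K N, g i ≤ a K := by
  induction N, hKN using Nat.le_induction with
  | base => simp
  | succ N hKN ih =>
    rw [Finset.sum_Ico_succ_top hKN]
    linarith [ih fun n h₁ h₂ ↦ h n h₁ (by omega), h N hKN N.lt_succ_self]

theorem exists_lt_of_sum_ge {a d g : ℕ → ℝ} {b c ε : ℝ} {K M N : ℕ}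
    (ha : ∀ n, 0 ≤ a n) (haK : a K ≤ b) (hg : ∀ n, g n ≤ 1) (hc : 0 < c) (hM : (b + 1) / c ≤ M)
    (hN : ((M + K : ℕ) : ℝ) ≤ ∑ i ∈ Finset.range (N + 1), g i)
    (hstep : ∀ n, K ≤ n → ε ≤ d n → a (n + 1) + g n * c ≤ a n) :
    ∃ n, K ≤ n ∧ n ≤ N ∧ d n < ε := by
  by_contra! hd
  have hsum_le (m : ℕ) : ∑ i ∈ Finset.range m, g i ≤ m := by
    simpa using Finset.sum_le_card_nsmul (Finset.range m) g 1 fun i _ ↦ hg i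
  push_cast at hN
  have hKN : K ≤ N + 1 := by
    by_contra! hlt
    have hsum := hsum_le (N + 1)
    have hNK : (N : ℝ) + 1 < K := by exact_mod_cast hlt
    push_cast at hsum
    linarith [(M.cast_nonneg : (0 : ℝ) ≤ M)]
  have htel := add_sum_Ico_le_of_succ_le hKN (g := fun i ↦ g i * c) fun n h₁ h₂ ↦
    hstep n h₁ (hd n h₁ (by omega))
  rw [← Finset.sum_mul] at htel
  have hMsum : (M : ℝ) ≤ ∑ i ∈ Finset.Ico K (N + 1), g i := by
    rw [← Finset.sum_range_add_sum_Ico _ hKN] at hN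
    linarith [hsum_le K]
  rw [div_le_iff₀ hc] at hM
  nlinarith [mul_le_mul_of_nonneg_right hMsum hc.le, ha (N + 1)]

theorem liminf_eq_zero_of_frequently_lt {u : ℕ → ℝ} (h₀ : ∀ n, 0 ≤ u n)
    (h : ∀ ε > 0, ∃ᶠ n in atTop, u n < ε) : liminf u atTop = 0 := by
  have hcobdd : IsCoboundedUnder (· ≥ ·) atTop u := ⟨1, fun a ha ↦ by
    obtain ⟨n, han, hn⟩ := ((eventually_map.1 ha).and_frequently (h 1 one_pos)).exists
    exact han.trans hn.le⟩
  refine le_antisymm (le_of_forall_pos_le_add fun ε hε ↦ ?_)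
    (le_liminf_of_le hcobdd (Eventually.of_forall h₀))
  rw [zero_add]
  exact liminf_le_of_frequently_le ((h ε hε).mono fun n hn ↦ hn.le)
    ⟨0, eventually_map.2 (Eventually.of_forall h₀)⟩

theorem dist_T_self_le_two_mul {X : Type*} [MetricSpace X] {C : Set X} {T : X → X}
    (hTne : ∀ x ∈ C, ∀ y ∈ C, dist (T x) (T y) ≤ dist x y)
    {p z : X} (hp : p ∈ C) (hTp : T p = p) (hz : z ∈ C) : dist z (T z) ≤ 2 * dist z p := by
  have hTz : dist (T z) p ≤ dist z p := by simpa [hTp] using hTne z hz p hp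
  linarith [dist_triangle_right z (T z) p]

namespace WHyp

variable {X : Type*} [MetricSpace X] (H : WHyp X)

theorem W_zero (x y : X) : H.W x y 0 = x := by
  simpa [eq_comm] using H.W1 x y x 0 ⟨le_rfl, zero_le_one⟩

theorem W_one (x y : X) : H.W x y 1 = y := by
  simpa [eq_comm] using H.W1 x y y 1 ⟨zero_le_one, le_rfl⟩

theorem dist_W_left (x y : X) {l : ℝ} (hl : l ∈ Icc (0 : ℝ) 1) :
    dist x (H.W x y l) = l * dist x y := by
  simpa [H.W_zero, abs_of_nonneg hl.1, dist_comm] using H.W2 x y l hl 0 ⟨le_rfl, zero_le_one⟩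

theorem dist_W_right (x y : X) {l : ℝ} (hl : l ∈ Icc (0 : ℝ) 1) :
    dist y (H.W x y l) = (1 - l) * dist x y := by
  have h := H.W2 x y l hl 1 ⟨zero_le_one, le_rfl⟩
  rwa [H.W_one, abs_of_nonpos (by linarith [hl.2]), neg_sub, dist_comm] at h

theorem dist_W_le_of_dist_le {x y p : X} {l : ℝ} (hl : l ∈ Icc (0 : ℝ) 1)
    (h : dist y p ≤ dist x p) : dist (H.W x y l) p ≤ dist x p := by
  have hW := H.W1 x y p l hl
  rw [dist_comm p x, dist_comm p y, dist_comm p] at hW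
  nlinarith [mul_le_mul_of_nonneg_left h hl.1]

variable {H} {η : ℝ → ℝ → ℝ}

/-- Geodesics are unique: if `z₁ ≠ z₂`, their midpoint is strictly closer to `x` than `α d(x, y)`
by uniform convexity, and no farther than `(1 - α) d(x, y)` from `y`, contradicting the triangle
inequality. -/
theorem UnifConvex.eq_of_dist_le (hU : H.UnifConvex η) {x y z₁ z₂ : X} {α : ℝ}
    (hx₁ : dist x z₁ ≤ α * dist x y) (hx₂ : dist x z₂ ≤ α * dist x y)
    (hy₁ : dist y z₁ ≤ (1 - α) * dist x y) (hy₂ : dist y z₂ ≤ (1 - α) * dist x y) :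
    z₁ = z₂ := by
  set r := α * dist x y
  have hz : dist z₁ z₂ ≤ 2 * r := by linarith [dist_triangle_left z₁ z₂ x]
  rcases le_or_gt r 0 with hr | hr
  · exact dist_le_zero.1 (by linarith)
  by_contra hne
  have hδ : dist z₁ z₂ / r ∈ Ioc (0 : ℝ) 2 :=
    ⟨div_pos (dist_pos.2 hne) hr, (div_le_iff₀ hr).2 (by linarith)⟩
  set m := H.W z₁ z₂ (1 / 2)
  have hmx : dist m x ≤ (1 - η r (dist z₁ z₂ / r)) * r :=
    hU.2 r _ x z₁ z₂ hr hδ (by rwa [dist_comm]) (by rwa [dist_comm])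
      (div_mul_cancel₀ _ hr.ne').le
  have hmy : dist y m ≤ (1 - α) * dist x y := by
    have := H.W1 z₁ z₂ y (1 / 2) (by norm_num)
    linarith
  have hη := mul_pos (hU.1 r _ hr hδ).1 hr
  linarith [dist_triangle x m y, dist_comm x m, dist_comm m y]

theorem UnifConvex.W_W_eq_mul (hU : H.UnifConvex η) (x y : X) {a b : ℝ}
    (ha : a ∈ Icc (0 : ℝ) 1) (hb : b ∈ Icc (0 : ℝ) 1) :
    H.W x (H.W x y b) a = H.W x y (a * b) := by
  have hab : a * b ∈ Icc (0 : ℝ) 1 := ⟨mul_nonneg ha.1 hb.1, mul_le_one₀ ha.2 hb.1 hb.2⟩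
  refine hU.eq_of_dist_le (y := y) (α := a * b) ?_ (H.dist_W_left _ _ hab).le ?_
    (H.dist_W_right _ _ hab).le
  · rw [H.dist_W_left _ _ ha, H.dist_W_left _ _ hb, mul_assoc]
  · calc dist y (H.W x (H.W x y b) a)
        ≤ (1 - a) * dist y x + a * dist y (H.W x y b) := H.W1 _ _ _ _ ha
      _ = (1 - a * b) * dist x y := by rw [dist_comm y x, H.dist_W_right _ _ hb]; ring

theorem UnifConvex.dist_W_le_of_le_half (hU : H.UnifConvex η) {r ε l : ℝ} {a x y : X}
    (hr : 0 < r) (hε : ε ∈ Ioc (0 : ℝ) 2) (hx : dist x a ≤ r) (hy : dist y a ≤ r)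
    (hxy : ε * r ≤ dist x y) (hl₀ : 0 ≤ l) (hl : l ≤ 1 / 2) :
    dist (H.W x y l) a ≤ (1 - 2 * l * η r ε) * r := by
  have h2l : 2 * l ∈ Icc (0 : ℝ) 1 := ⟨by linarith, by linarith⟩
  have hmid := hU.2 r ε a x y hr hε hx hy hxy
  have hW : H.W x y l = H.W x (H.W x y (1 / 2)) (2 * l) := by
    rw [hU.W_W_eq_mul x y h2l (by norm_num)]
    ring_nf
  calc dist (H.W x y l) a
      ≤ (1 - 2 * l) * dist a x + 2 * l * dist a (H.W x y (1 / 2)) := by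
        rw [hW, dist_comm]
        exact H.W1 _ _ _ _ h2l
    _ ≤ (1 - 2 * l) * r + 2 * l * ((1 - η r ε) * r) := by
        rw [dist_comm a x, dist_comm a]
        gcongr
        linarith
    _ = (1 - 2 * l * η r ε) * r := by ring

theorem UnifConvex.dist_W_le (hU : H.UnifConvex η) {r ε l : ℝ} {a x y : X}
    (hr : 0 < r) (hε : ε ∈ Ioc (0 : ℝ) 2) (hx : dist x a ≤ r) (hy : dist y a ≤ r)
    (hxy : ε * r ≤ dist x y) (hl : l ∈ Icc (0 : ℝ) 1) :
    dist (H.W x y l) a ≤ (1 - 2 * l * (1 - l) * η r ε) * r := by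
  have hηr := mul_nonneg (hU.1 r ε hr hε).1.le hr.le
  rcases le_or_gt l (1 / 2) with h | h
  · calc dist (H.W x y l) a ≤ (1 - 2 * l * η r ε) * r :=
          hU.dist_W_le_of_le_half hr hε hx hy hxy hl.1 h
      _ ≤ _ := by nlinarith [mul_nonneg (mul_self_nonneg l) hηr]
  · rw [H.W3 x y l hl]
    calc dist (H.W y x (1 - l)) a ≤ (1 - 2 * (1 - l) * η r ε) * r :=
          hU.dist_W_le_of_le_half hr hε hy hx (by rwa [dist_comm]) (by linarith [hl.2])
            (by linarith)
      _ ≤ _ := by nlinarith [mul_nonneg (mul_self_nonneg (1 - l)) hηr]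

/-- Monotonicity of `η` is what allows the modulus at the a priori bound `b` instead of the
unknown radius `d(z, p)`. -/
theorem UnifConvex.dist_W_add_le (hU : H.UnifConvex η) (hmon : MonotoneModulus η)
    {z w p : X} {b ε l : ℝ} (hb : 0 < b) (hε : 0 < ε) (hεb : ε ≤ 2 * b)
    (hz : dist z p ≤ b) (hw : dist w p ≤ dist z p) (hzw : ε ≤ dist z w)
    (hl : l ∈ Icc (0 : ℝ) 1) :
    dist (H.W z w l) p + l * (1 - l) * (ε * η b (ε / b)) ≤ dist z p := by
  set r := dist z p
  have hδ : ε / b ∈ Ioc (0 : ℝ) 2 := ⟨div_pos hε hb, (div_le_iff₀ hb).2 (by linarith)⟩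
  have hεr : ε ≤ 2 * r := by linarith [dist_triangle_right z w p]
  have hr : 0 < r := by linarith
  have hδr : ε / b * r ≤ dist z w := by
    calc ε / b * r ≤ ε / b * b := by gcongr
      _ = ε := div_mul_cancel₀ _ hb.ne'
      _ ≤ dist z w := hzw
  have huc := hU.dist_W_le hr hδ le_rfl hw hδr hl
  have hη := (hU.1 b _ hb hδ).1.le
  have hll : 0 ≤ l * (1 - l) := mul_nonneg hl.1 (sub_nonneg.2 hl.2)
  have h₁ := mul_le_mul_of_nonneg_left hεr (mul_nonneg hll hη)
  have h₂ := mul_le_mul_of_nonneg_right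
    (mul_le_mul_of_nonneg_left (hmon r b _ hr hz hδ) hll) hr.le
  nlinarith

variable {C : Set X} {T : X → X}

theorem ishSeq_mem (hC : H.ConvexSet C) (hT : MapsTo T C C) {l s : ℕ → ℝ}
    (hl : ∀ n, l n ∈ Icc (0 : ℝ) 1) (hs : ∀ n, s n ∈ Icc (0 : ℝ) 1) {x : X} (hx : x ∈ C)
    (n : ℕ) : H.ishSeq T l s x n ∈ C := by
  induction n with
  | zero => exact hx
  | succ n ih => exact hC _ ih _ (hT (hC _ ih _ (hT ih) _ (hs n))) _ (hl n)

theorem dist_T_W_le (hC : H.ConvexSet C) (hT : MapsTo T C C)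
    (hTne : ∀ x ∈ C, ∀ y ∈ C, dist (T x) (T y) ≤ dist x y) {p z : X} (hp : p ∈ C)
    (hTp : T p = p) (hz : z ∈ C) {σ : ℝ} (hσ : σ ∈ Icc (0 : ℝ) 1) :
    dist (T (H.W z (T z) σ)) p ≤ dist z p := by
  have hTz : dist (T z) p ≤ dist z p := by simpa [hTp] using hTne z hz p hp
  calc dist (T (H.W z (T z) σ)) p = dist (T (H.W z (T z) σ)) (T p) := by rw [hTp]
    _ ≤ dist (H.W z (T z) σ) p := hTne _ (hC _ hz _ (hT hz) _ hσ) _ hp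
    _ ≤ dist z p := H.dist_W_le_of_dist_le hσ hTz

theorem one_sub_mul_dist_le_dist_T_W (hC : H.ConvexSet C) (hT : MapsTo T C C)
    (hTne : ∀ x ∈ C, ∀ y ∈ C, dist (T x) (T y) ≤ dist x y) {z : X} (hz : z ∈ C) {σ : ℝ}
    (hσ : σ ∈ Icc (0 : ℝ) 1) :
    (1 - σ) * dist z (T z) ≤ dist z (T (H.W z (T z) σ)) := by
  have h := hTne _ (hC _ hz _ (hT hz) _ hσ) _ hz
  rw [dist_comm _ z, H.dist_W_left _ _ hσ] at h
  linarith [dist_triangle z (T (H.W z (T z) σ)) (T z)]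

theorem UnifConvex.dist_ishikawa_add_le (hU : H.UnifConvex η) (hmon : MonotoneModulus η)
    (hC : H.ConvexSet C) (hT : MapsTo T C C)
    (hTne : ∀ x ∈ C, ∀ y ∈ C, dist (T x) (T y) ≤ dist x y) {p z : X} (hp : p ∈ C)
    (hTp : T p = p) (hz : z ∈ C) {σ l b ε L : ℝ} (hσ : σ ∈ Icc (0 : ℝ) 1)
    (hl : l ∈ Icc (0 : ℝ) 1) (hL : 0 < L) (hσL : σ ≤ 1 - 1 / L) (hb : 0 < b) (hε : 0 < ε)
    (hεb : ε / L ≤ 2 * b) (hzb : dist z p ≤ b) (hεz : ε ≤ dist z (T z)) :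
    dist (H.W z (T (H.W z (T z) σ)) l) p + l * (1 - l) * (ε / L * η b (ε / L / b)) ≤
      dist z p := by
  have hfar : ε / L ≤ dist z (T (H.W z (T z) σ)) :=
    calc ε / L = 1 / L * ε := by ring
      _ ≤ (1 - σ) * dist z (T z) := by gcongr <;> linarith [hσ.2]
      _ ≤ _ := H.one_sub_mul_dist_le_dist_T_W hC hT hTne hz hσ
  exact hU.dist_W_add_le hmon hb (by positivity) hεb hzb
    (H.dist_T_W_le hC hT hTne hp hTp hz hσ) hfar hl

theorem dist_ishSeq_le (hC : H.ConvexSet C) (hT : MapsTo T C C)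
    (hTne : ∀ x ∈ C, ∀ y ∈ C, dist (T x) (T y) ≤ dist x y) {l s : ℕ → ℝ}
    (hl : ∀ n, l n ∈ Icc (0 : ℝ) 1) (hs : ∀ n, s n ∈ Icc (0 : ℝ) 1) {x p : X} (hx : x ∈ C)
    (hp : p ∈ C) (hTp : T p = p) (n : ℕ) : dist (H.ishSeq T l s x n) p ≤ dist x p := by
  have hanti : Antitone fun n ↦ dist (H.ishSeq T l s x n) p := antitone_nat_of_succ_le fun n ↦
    H.dist_W_le_of_dist_le (hl n)
      (dist_T_W_le hC hT hTne hp hTp (ishSeq_mem hC hT hl hs hx n) (hs n))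
  exact hanti n.zero_le

end WHyp

theorem stmt18_general {X : Type*} [MetricSpace X] (H : WHyp X)
    (η : ℝ → ℝ → ℝ) (hU : H.UnifConvex η) (hmon : MonotoneModulus η)
    (C : Set X) (hCconv : H.ConvexSet C)
    (T : X → X) (hT : Set.MapsTo T C C)
    (hTne : ∀ x ∈ C, ∀ y ∈ C, dist (T x) (T y) ≤ dist x y)
    (l s : ℕ → ℝ) (hl : ∀ n, l n ∈ Set.Icc (0:ℝ) 1) (hs : ∀ n, s n ∈ Set.Icc (0:ℝ) 1)
    (x : X) (hx : x ∈ C)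
    (xs : ℕ → X) (hxs : xs = H.ishSeq T l s x)
    (θ : ℕ → ℕ)
    (hθ : ∀ n : ℕ, (n : ℝ) ≤ ∑ i ∈ Finset.range (θ n + 1), l i * (1 - l i))
    (b : ℝ) (hb : 0 < b) (hbp : ∃ p ∈ C, T p = p ∧ dist x p ≤ b)
    (L N₀ : ℕ) (hL : 1 ≤ L) (hsL : ∀ n ≥ N₀, s n ≤ 1 - 1 / (L : ℝ)) :
    (∀ ε : ℝ, 0 < ε → ∀ k : ℕ, ∃ N : ℕ, k ≤ N ∧ N ≤ hRate η b θ (ε / L) (k + N₀) ∧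
      dist (xs N) (T (xs N)) < ε) ∧
    Filter.liminf (fun n => dist (xs n) (T (xs n))) Filter.atTop = 0 := by
  obtain ⟨p, hp, hTp, hpb⟩ := hbp
  subst hxs
  have hmem := H.ishSeq_mem hCconv hT hl hs hx
  have hdist n : dist (H.ishSeq T l s x n) p ≤ b :=
    (H.dist_ishSeq_le hCconv hT hTne hl hs hx hp hTp n).trans hpb
  have hL₀ : (0 : ℝ) < L := by exact_mod_cast hL
  have hrate (ε : ℝ) (hε : 0 < ε) (k : ℕ) : ∃ N, k ≤ N ∧ N ≤ hRate η b θ (ε / L) (k + N₀) ∧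
      dist (H.ishSeq T l s x N) (T (H.ishSeq T l s x N)) < ε := by
    by_cases hεb : ε / L ≤ 2 * b
    · rw [hRate, if_pos hεb]
      set c := ε / L * η b (ε / L / b)
      have hc : 0 < c :=
        mul_pos (by positivity) (hU.1 b _ hb ⟨by positivity, (div_le_iff₀ hb).2 (by linarith)⟩).1
      obtain ⟨N, hKN, hN, hNε⟩ := exists_lt_of_sum_ge (a := fun n ↦ dist (H.ishSeq T l s x n) p)
        (d := fun n ↦ dist (H.ishSeq T l s x n) (T (H.ishSeq T l s x n))) (K := k + N₀)
        (fun n ↦ dist_nonneg) (hdist _)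
        (fun n ↦ mul_le_one₀ (hl n).2 (sub_nonneg.2 (hl n).2) (by linarith [(hl n).1]))
        hc (Nat.le_ceil _) (hθ _) fun n hn hεn ↦
          hU.dist_ishikawa_add_le hmon hCconv hT hTne hp hTp (hmem n) (hs n) (hl n) hL₀
            (hsL n (by omega)) hb hε hεb (hdist n) hεn
      exact ⟨N, by omega, hN, hNε⟩
    · refine ⟨k + N₀, by omega, by rw [hRate, if_neg hεb], ?_⟩
      calc _ ≤ 2 * b := by
            linarith [dist_T_self_le_two_mul hTne hp hTp (hmem (k + N₀)), hdist (k + N₀)]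
        _ < ε / L := not_le.1 hεb
        _ ≤ ε := div_le_self hε.le (by exact_mod_cast hL)
  exact ⟨hrate, liminf_eq_zero_of_frequently_lt (fun n ↦ dist_nonneg) fun ε hε ↦
    frequently_atTop.2 fun k ↦ (hrate ε hε k).imp fun N hN ↦ ⟨hN.1, hN.2.2⟩⟩

theorem stmt18 {X : Type*} [MetricSpace X] (H : WHyp X)
    (η : ℝ → ℝ → ℝ) (hU : H.UnifConvex η) (hmon : MonotoneModulus η)
    (C : Set X) (hCne : C.Nonempty) (hCconv : H.ConvexSet C)
    (T : X → X) (hT : Set.MapsTo T C C)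
    (hTne : ∀ x ∈ C, ∀ y ∈ C, dist (T x) (T y) ≤ dist x y)
    (l s : ℕ → ℝ) (hl : ∀ n, l n ∈ Set.Icc (0:ℝ) 1) (hs : ∀ n, s n ∈ Set.Icc (0:ℝ) 1)
    (x : X) (hx : x ∈ C)
    (xs : ℕ → X) (hxs : xs = H.ishSeq T l s x)
    (ys : ℕ → X) (hys : ∀ n, ys n = H.W (xs n) (T (xs n)) (s n))
    (θ : ℕ → ℕ)
    (hθ : ∀ n : ℕ, (n : ℝ) ≤ ∑ i ∈ Finset.range (θ n + 1), l i * (1 - l i))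
    (b : ℝ) (hb : 0 < b) (hbp : ∃ p ∈ C, T p = p ∧ dist x p ≤ b)
    (L N₀ : ℕ) (hL : 1 ≤ L) (hsL : ∀ n ≥ N₀, s n ≤ 1 - 1 / (L : ℝ)) :
    (∀ ε : ℝ, 0 < ε → ∀ k : ℕ, ∃ N : ℕ, k ≤ N ∧ N ≤ hRate η b θ (ε / L) (k + N₀) ∧
      dist (xs N) (T (xs N)) < ε) ∧
    Filter.liminf (fun n => dist (xs n) (T (xs n))) Filter.atTop = 0 :=
  stmt18_general H η hU hmon C hCconv T hT hTne l s hl hs x hx xs hxs θ hθ b hb hbp L N₀ hL hsL
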